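/- Let q > 1 and let M : ℝ^p → ℝ^{q×q} be affine with M(x) symmetric for each x, and suppose each column of M lies in the space L of affine maps a with (1, −2yᵀ)a(x) = 0 whenever x_1 = yᵀy. Then M = c ζ for some scalar c ∈ ℝ, where ζ(x) = [[4x_1, 2yᵀ],[2y, Id]]. -/
import Mathlib
open Matrix

noncomputable def zetaMat (n : ℕ) (x1 : ℝ) (y : Fin n → ℝ) :
    Matrix (Unit ⊕ Fin n) (Unit ⊕ Fin n) ℝ :=
  Matrix.of fun r c =>
    match r, c with
    | Sum.inl _, Sum.inl _ => 4 * x1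
    | Sum.inl _, Sum.inr j => 2 * y j
    | Sum.inr j, Sum.inl _ => 2 * y j
    | Sum.inr j, Sum.inr k => if j = k then 1 else 0

private lemma sum_single_mul {ι : Type*} [Fintype ι] [DecidableEq ι] (j : ι) (t : ℝ) (f : ι → ℝ) :
    ∑ i, (Pi.single j t : ι → ℝ) i * f i = t * f j := by
  simp [Pi.single_apply, ite_mul, Finset.sum_ite_eq']

private lemma sum_pair_mul {ι : Type*} [Fintype ι] [DecidableEq ι] (j l : ι)
    (t u : ℝ) (f : ι → ℝ) :
    ∑ i, ((Pi.single j t : ι → ℝ) i + (Pi.single l u : ι → ℝ) i) * f i = t * f j + u * f l := by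
  simp [Pi.single_apply, add_mul, ite_mul, Finset.sum_add_distrib, Finset.sum_ite_eq']

private lemma sum_mul_ite {ι : Type*} [Fintype ι] [DecidableEq ι] (k : ι) (e : ℝ) (f : ι → ℝ) :
    ∑ j, f j * (if j = k then e else 0) = f k * e := by
  simp [mul_ite, Finset.sum_ite_eq']

/-- If `M : ℝᵖ → ℝ^{q×q}` is affine with symmetric values and each of its columns `a`
satisfies `(1, -2yᵀ) a(x) = 0` whenever `x₁ = yᵀy`, then `M = c ζ` for some `c ∈ ℝ`.
Coordinates: `x = (x₁, y, z)` indexed by `(Unit ⊕ Fin n) ⊕ Fin m`, `q = n + 1 > 1`. -/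
theorem stmt10 (n m : ℕ) (hn : 1 ≤ n)
    (M : (((Unit ⊕ Fin n) ⊕ Fin m) → ℝ) → Matrix (Unit ⊕ Fin n) (Unit ⊕ Fin n) ℝ)
    (A0 : Matrix (Unit ⊕ Fin n) (Unit ⊕ Fin n) ℝ)
    (A : ((Unit ⊕ Fin n) ⊕ Fin m) → Matrix (Unit ⊕ Fin n) (Unit ⊕ Fin n) ℝ)
    (haff : ∀ x, M x = A0 + ∑ i, x i • A i)
    (hsymm : ∀ x, (M x).IsSymm)
    (hcol : ∀ x : ((Unit ⊕ Fin n) ⊕ Fin m) → ℝ,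
      x (Sum.inl (Sum.inl ())) = ∑ j, (x (Sum.inl (Sum.inr j))) ^ 2 →
      Matrix.vecMul (Sum.elim (fun _ => (1 : ℝ)) fun j => -2 * x (Sum.inl (Sum.inr j)))
        (M x) = 0) :
    ∃ c : ℝ, ∀ x,
      M x = c • zetaMat n (x (Sum.inl (Sum.inl ()))) (fun j => x (Sum.inl (Sum.inr j))) := by
  classical
  -- entrywise symmetry of M
  have hMsymm : ∀ x r c, M x r c = M x c r := by
    intro x r c
    exact (hsymm x).apply c r
  -- M 0 = A0
  have hM0 : M 0 = A0 := by
    rw [haff]; simp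
  have hA0s : ∀ r c, A0 r c = A0 c r := by
    intro r c; rw [← hM0]; exact hMsymm 0 r c
  have hAi : ∀ i, M (Pi.single i 1) = A0 + A i := by
    intro i
    rw [haff]
    congr 1
    simp [Pi.single_apply, ite_smul, Finset.sum_ite_eq']
  have hAs : ∀ i r c, A i r c = A i c r := by
    intro i r c
    have h1 := hMsymm (Pi.single i 1) r c
    have h2 := hA0s r c
    rw [hAi] at h1
    simp only [Matrix.add_apply] at h1
    linarith
  -- entry formula at the parabola points
  have hentry : ∀ (y : Fin n → ℝ) (z : Fin m → ℝ) r c,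
      M (Sum.elim (Sum.elim (fun _ => ∑ j, y j * y j) y) z) r c =
        A0 r c + (∑ j, y j * y j) * A (Sum.inl (Sum.inl ())) r c
          + (∑ j, y j * A (Sum.inl (Sum.inr j)) r c) + ∑ k, z k * A (Sum.inr k) r c := by
    intro y z r c
    rw [haff]
    simp [Matrix.sum_apply, Fintype.sum_sum_type, mul_comm]
    ring
  -- the column constraint
  have hE : ∀ (y : Fin n → ℝ) (z : Fin m → ℝ) (c : Unit ⊕ Fin n),
      M (Sum.elim (Sum.elim (fun _ => ∑ j, y j * y j) y) z) (Sum.inl ()) c =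
        2 * ∑ j, y j * M (Sum.elim (Sum.elim (fun _ => ∑ j, y j * y j) y) z) (Sum.inr j) c := by
    intro y z c
    have h := congrFun (hcol (Sum.elim (Sum.elim (fun _ => ∑ j, y j * y j) y) z)
      (by simp [pow_two])) c
    simp only [Matrix.vecMul, dotProduct, Fintype.sum_sum_type, Sum.elim_inl,
      Sum.elim_inr, Pi.zero_apply, Finset.univ_unique, Finset.sum_singleton, one_mul] at h
    have hs : ∑ j, (-2 * y j) * M (Sum.elim (Sum.elim (fun _ => ∑ j, y j * y j) y) z) (Sum.inr j) c
        = -2 * ∑ j, y j * M (Sum.elim (Sum.elim (fun _ => ∑ j, y j * y j) y) z) (Sum.inr j) c := by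
      rw [Finset.mul_sum]
      exact Finset.sum_congr rfl fun _ _ => by ring
    rw [hs] at h
    linarith
  have key1 : ∀ (c : Unit ⊕ Fin n) (j : Fin n) (t : ℝ),
      A0 (Sum.inl ()) c + t * t * A (Sum.inl (Sum.inl ())) (Sum.inl ()) c
        + t * A (Sum.inl (Sum.inr j)) (Sum.inl ()) c =
      2 * (t * (A0 (Sum.inr j) c + t * t * A (Sum.inl (Sum.inl ())) (Sum.inr j) c
        + t * A (Sum.inl (Sum.inr j)) (Sum.inr j) c)) := by
    intro c j t
    have h := hE (Pi.single j t) 0 c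
    simp only [hentry] at h
    simp only [sum_single_mul, Pi.single_eq_same, Pi.zero_apply, zero_mul,
      Finset.sum_const_zero, add_zero] at h
    linear_combination h
  have h10 : ∀ c, A0 (Sum.inl ()) c = 0 := by
    intro c
    simpa using key1 c ⟨0, hn⟩ 0
  have h2 : ∀ (c) (j : Fin n),
      A (Sum.inl (Sum.inr j)) (Sum.inl ()) c = 2 * A0 (Sum.inr j) c := by
    intro c j
    have e1 := key1 c j 1
    have em := key1 c j (-1)
    have e2 := key1 c j 2
    have e0 := h10 c
    norm_num at e1 em e2
    linarith
  have h3 : ∀ (c) (j : Fin n),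
      A (Sum.inl (Sum.inl ())) (Sum.inl ()) c
        = 2 * A (Sum.inl (Sum.inr j)) (Sum.inr j) c := by
    intro c j
    have e1 := key1 c j 1
    have em := key1 c j (-1)
    have e2 := key1 c j 2
    have e0 := h10 c
    norm_num at e1 em e2
    linarith
  have h4 : ∀ (c) (j : Fin n), A (Sum.inl (Sum.inl ())) (Sum.inr j) c = 0 := by
    intro c j
    have e1 := key1 c j 1
    have em := key1 c j (-1)
    have e2 := key1 c j 2
    have e0 := h10 c
    norm_num at e1 em e2
    linarith
  -- z-coefficients vanish
  have h5 : ∀ (c) (k : Fin m), A (Sum.inr k) (Sum.inl ()) c = 0 := by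
    intro c k
    have h := hE 0 (Pi.single k 1) c
    simp only [hentry] at h
    simp only [sum_single_mul, Pi.zero_apply, zero_mul, Finset.sum_const_zero,
      add_zero, zero_add, mul_zero, Pi.single_eq_same, one_mul] at h
    have := h10 c
    linarith
  have h6 : ∀ (c) (j : Fin n) (k : Fin m), A (Sum.inr k) (Sum.inr j) c = 0 := by
    intro c j k
    have h := hE (Pi.single j 1) (Pi.single k 1) c
    simp only [hentry] at h
    simp only [sum_single_mul, Pi.single_eq_same, one_mul] at h
    have e1 := key1 c j 1
    have e5 := h5 c k
    norm_num at e1 h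
    linarith
  -- mixed y-coefficients
  have h7 : ∀ (c) (j l : Fin n), j ≠ l →
      A (Sum.inl (Sum.inr l)) (Sum.inr j) c + A (Sum.inl (Sum.inr j)) (Sum.inr l) c = 0 := by
    intro c j l hjl
    have h := hE ((Pi.single j (1:ℝ) : Fin n → ℝ) + (Pi.single l (1:ℝ) : Fin n → ℝ)) 0 c
    simp only [hentry] at h
    simp only [Pi.add_apply, sum_pair_mul, Pi.single_eq_same, Pi.zero_apply, zero_mul,
      Finset.sum_const_zero, add_zero, Pi.single_eq_of_ne hjl, Pi.single_eq_of_ne hjl.symm] at h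
    norm_num at h
    have e2j := h2 c j; have e2l := h2 c l
    have e3j := h3 c j; have e3l := h3 c l
    have e4j := h4 c j; have e4l := h4 c l
    have e0 := h10 c
    linarith
  have h8 : ∀ (j k : Fin n), A (Sum.inl (Sum.inr j)) (Sum.inr j) (Sum.inr k) = 0 := by
    intro j k
    have e3 := h3 (Sum.inr k) j
    have s := hAs (Sum.inl (Sum.inl ())) (Sum.inl ()) (Sum.inr k)
    have e4 := h4 (Sum.inl ()) k
    linarith
  have hanti : ∀ (j l k : Fin n),
      A (Sum.inl (Sum.inr j)) (Sum.inr l) (Sum.inr k)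
        + A (Sum.inl (Sum.inr l)) (Sum.inr j) (Sum.inr k) = 0 := by
    intro j l k
    by_cases hjl : j = l
    · subst hjl
      have := h8 j k
      linarith
    · have := h7 (Sum.inr k) l j (fun h => hjl h.symm)
      linarith
  have h9 : ∀ (j l k : Fin n), A (Sum.inl (Sum.inr j)) (Sum.inr l) (Sum.inr k) = 0 := by
    intro j l k
    have a1 := hanti j l k
    have a2 := hanti l k j
    have a3 := hanti k j l
    have s1 := hAs (Sum.inl (Sum.inr l)) (Sum.inr j) (Sum.inr k)
    have s2 := hAs (Sum.inl (Sum.inr k)) (Sum.inr l) (Sum.inr j)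
    have s3 := hAs (Sum.inl (Sum.inr j)) (Sum.inr k) (Sum.inr l)
    linarith
  -- entry values
  have hZ : ∀ (k : Fin m) (r c : Unit ⊕ Fin n), A (Sum.inr k) r c = 0 := by
    intro k r c
    rcases r with ⟨⟩ | j
    · exact h5 c k
    · exact h6 c j k
  have hA0rr : ∀ j l : Fin n, A0 (Sum.inr j) (Sum.inr l) =
      if j = l then A (Sum.inl (Sum.inl ())) (Sum.inl ()) (Sum.inl ()) / 4 else 0 := by
    intro j l
    by_cases hjl : j = l
    · subst hjl
      rw [if_pos rfl]
      have e2 := h2 (Sum.inr j) j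
      have e3 := h3 (Sum.inl ()) j
      have s := hAs (Sum.inl (Sum.inr j)) (Sum.inl ()) (Sum.inr j)
      linarith
    · rw [if_neg hjl]
      have e7 := h7 (Sum.inl ()) j l hjl
      have s1 := hAs (Sum.inl (Sum.inr l)) (Sum.inr j) (Sum.inl ())
      have s2 := hAs (Sum.inl (Sum.inr j)) (Sum.inr l) (Sum.inl ())
      have e2a := h2 (Sum.inr j) l
      have e2b := h2 (Sum.inr l) j
      have s0 := hA0s (Sum.inr l) (Sum.inr j)
      linarith
  have hTil : ∀ j : Fin n, A (Sum.inl (Sum.inr j)) (Sum.inl ()) (Sum.inl ()) = 0 := by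
    intro j
    have e2 := h2 (Sum.inl ()) j
    have s := hA0s (Sum.inr j) (Sum.inl ())
    have e0 := h10 (Sum.inr j)
    linarith
  have hTik : ∀ j k : Fin n, A (Sum.inl (Sum.inr j)) (Sum.inl ()) (Sum.inr k) =
      if j = k then A (Sum.inl (Sum.inl ())) (Sum.inl ()) (Sum.inl ()) / 2 else 0 := by
    intro j k
    have e2 := h2 (Sum.inr k) j
    rw [e2, hA0rr j k]
    by_cases hjk : j = k <;> simp [hjk] <;> ring
  have hTki : ∀ j k : Fin n, A (Sum.inl (Sum.inr j)) (Sum.inr k) (Sum.inl ()) =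
      if j = k then A (Sum.inl (Sum.inl ())) (Sum.inl ()) (Sum.inl ()) / 2 else 0 := by
    intro j k
    rw [hAs (Sum.inl (Sum.inr j)) (Sum.inr k) (Sum.inl ())]
    exact hTik j k
  have hA1ik : ∀ k : Fin n, A (Sum.inl (Sum.inl ())) (Sum.inl ()) (Sum.inr k) = 0 := by
    intro k
    rw [hAs (Sum.inl (Sum.inl ())) (Sum.inl ()) (Sum.inr k)]
    exact h4 (Sum.inl ()) k
  have hA0ri : ∀ j : Fin n, A0 (Sum.inr j) (Sum.inl ()) = 0 := by
    intro j
    rw [hA0s (Sum.inr j) (Sum.inl ())]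
    exact h10 (Sum.inr j)
  -- final assembly
  refine ⟨A (Sum.inl (Sum.inl ())) (Sum.inl ()) (Sum.inl ()) / 4, fun x => ?_⟩
  have hsplit : ∀ r c, (∑ i, x i • A i) r c =
      x (Sum.inl (Sum.inl ())) * A (Sum.inl (Sum.inl ())) r c
      + (∑ j, x (Sum.inl (Sum.inr j)) * A (Sum.inl (Sum.inr j)) r c)
      + ∑ k, x (Sum.inr k) * A (Sum.inr k) r c := by
    intro r c
    simp [Matrix.sum_apply, Fintype.sum_sum_type]
  ext r c
  rw [haff]
  simp only [Matrix.add_apply, Matrix.smul_apply, smul_eq_mul, hsplit]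
  rcases r with ⟨⟩ | j <;> rcases c with ⟨⟩ | k
  · rw [h10 (Sum.inl ())]
    simp only [hTil, hZ, mul_zero, Finset.sum_const_zero]
    simp only [zetaMat, Matrix.of_apply]
    ring
  · rw [h10 (Sum.inr k), hA1ik k]
    simp only [hTik, sum_mul_ite, hZ, mul_zero, Finset.sum_const_zero]
    simp only [zetaMat, Matrix.of_apply]
    ring
  · rw [hA0ri j, h4 (Sum.inl ()) j]
    simp only [hTki, sum_mul_ite, hZ, mul_zero, Finset.sum_const_zero]
    simp only [zetaMat, Matrix.of_apply]
    ring
  · rw [hA0rr j k, h4 (Sum.inr k) j]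
    simp only [h9, hZ, mul_zero, Finset.sum_const_zero]
    simp only [zetaMat, Matrix.of_apply]
    by_cases hjk : j = k <;> simp [hjk]
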